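/- arXiv:1301.6198 — 3 statements merged into one kernel-verified Lean document; each statement's English description precedes it below -/
import Mathlib

section
/- For n_d > 0, α ≥ 0 with α ≠ 1, and n_i = α·n_d, the quantity max(n_d, n_i) + f(n_d, n_i | n_i, n_i) + max(0, n_d − n_i), where f is as defined for the LDC sum-rate bound, equals n_d·(3·max(1,α) − α). -/
/-- The real-valued LDC conditional-entropy function `f(c,d|a,b)`. -/
noncomputable def ldcFR (c d a b : ℝ) : ℝ :=
  if c - d ≠ a - b then max (c + b) (a + d) - max a b
  else max (max a b) (max c d) - max a b

theorem ldc_sum_capacity_3user (n_d n_i α : ℝ) (hpos : 0 < n_d) (hα : 0 ≤ α)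
    (hα1 : α ≠ 1) (hni : n_i = α * n_d) :
    max n_d n_i + ldcFR n_d n_i n_i n_i + max 0 (n_d - n_i)
      = n_d * (3 * max 1 α - α) := by
  subst hni
  have hne : n_d - α * n_d ≠ α * n_d - α * n_d := by
    intro h
    apply hα1
    have h2 : (α - 1) * n_d = 0 := by linarith
    rcases mul_eq_zero.1 h2 with h3 | h3
    · linarith
    · exact absurd h3 (ne_of_gt hpos)
  rw [ldcFR, if_pos hne]
  rcases lt_or_gt_of_ne hα1 with h | h
  · have h1 : α * n_d < n_d := by nlinarith
    rw [max_eq_left_of_lt h1, max_eq_left (by linarith : n_d + α * n_d ≥ α * n_d + α * n_d),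
      max_self, max_eq_right (by linarith : (0:ℝ) ≤ n_d - α * n_d),
      max_eq_left (le_of_lt h)]
    ring
  · have h1 : n_d < α * n_d := by nlinarith
    rw [max_eq_right_of_lt h1, max_eq_right (by linarith : n_d + α * n_d ≤ α * n_d + α * n_d),
      max_self, max_eq_left (by linarith : n_d - α * n_d ≤ 0),
      max_eq_right (le_of_lt h)]
    ring
end

section
/- For every integer K ≥ 4, (K−2)·log 2 + (K−2)·log((K+1)(K−2)/(2(K−1))) + log(2(K−3)(K−2)/(K−1)²) ≤ (K−2)·log(K−2) + log(2·e²), where log denotes natural logarithm. -/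
theorem cms_additive_gap_bound (K : ℕ) (hK : 4 ≤ K) :
    ((K : ℝ) - 2) * Real.log 2
      + ((K : ℝ) - 2) * Real.log (((K : ℝ) + 1) * ((K : ℝ) - 2) / (2 * ((K : ℝ) - 1)))
      + Real.log (2 * ((K : ℝ) - 3) * ((K : ℝ) - 2) / ((K : ℝ) - 1) ^ 2)
    ≤ ((K : ℝ) - 2) * Real.log ((K : ℝ) - 2) + Real.log (2 * Real.exp 2) := by
  have hx : (4:ℝ) ≤ (K:ℝ) := by exact_mod_cast hK
  set x : ℝ := (K:ℝ) with hxdef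
  have h2 : (0:ℝ) < x - 2 := by linarith
  have h1 : (0:ℝ) < x - 1 := by linarith
  have h3 : (0:ℝ) < x - 3 := by linarith
  have hp : (0:ℝ) < x + 1 := by linarith
  have e1 : Real.log ((x+1)*(x-2)/(2*(x-1)))
      = Real.log (x-2) + Real.log ((x+1)/(x-1)) - Real.log 2 := by
    rw [Real.log_div (by positivity) (by positivity),
        Real.log_mul (by positivity) (by positivity),
        Real.log_mul (by norm_num) (by positivity),
        Real.log_div (by positivity) (by positivity)]
    ring
  have e2 : Real.log (2*(x-3)*(x-2)/(x-1)^2)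
      = Real.log 2 + Real.log ((x-3)*(x-2)/(x-1)^2) := by
    rw [show 2*(x-3)*(x-2)/(x-1)^2 = 2 * ((x-3)*(x-2)/(x-1)^2) by ring,
        Real.log_mul (by norm_num) (by positivity)]
  have e3 : Real.log (2 * Real.exp 2) = Real.log 2 + 2 := by
    rw [Real.log_mul (by norm_num) (Real.exp_ne_zero 2), Real.log_exp]
  have b1 : Real.log ((x+1)/(x-1)) ≤ 2/(x-1) := by
    have hle := Real.log_le_sub_one_of_pos (show (0:ℝ) < (x+1)/(x-1) by positivity)
    have heq : (x+1)/(x-1) - 1 = 2/(x-1) := by field_simp; ring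
    linarith
  have b1' : (x-2) * Real.log ((x+1)/(x-1)) ≤ 2 := by
    have h := mul_le_mul_of_nonneg_left b1 h2.le
    have h' : (x-2) * (2/(x-1)) ≤ 2 := by
      rw [mul_div_assoc', div_le_iff₀ h1]; linarith
    linarith
  have b2 : Real.log ((x-3)*(x-2)/(x-1)^2) ≤ 0 := by
    apply Real.log_nonpos (by positivity)
    rw [div_le_one (by positivity)]
    nlinarith
  rw [e1, e2, e3]
  nlinarith [b1', b2]
end

section
/- For all real h_d ≥ 0 and complex h_i with |h_i| ≥ 1, log(2) + log(1 + (h_d + 2|h_i|)²) − log(1 + (h_d + |h_i|/2)²/2) ≤ 6·log(2). -/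
-- The difference of the two sides is `31 + 15 x ^ 2 + 12 x y`; the constant `2 ^ 5` is sharp as `y → ∞`.
theorem one_add_sq_add_two_mul_le {x y : ℝ} (hxy : 0 ≤ x * y) :
    1 + (x + 2 * y) ^ 2 ≤ 2 ^ 5 * (1 + (x + y / 2) ^ 2 / 2) := by
  nlinarith [sq_nonneg x]

theorem log_one_add_sq_add_two_mul_sub_le {x y : ℝ} (hxy : 0 ≤ x * y) :
    Real.log (1 + (x + 2 * y) ^ 2) - Real.log (1 + (x + y / 2) ^ 2 / 2) ≤ 5 * Real.log 2 := by
  have hlog : Real.log (1 + (x + 2 * y) ^ 2) ≤ Real.log (2 ^ 5 * (1 + (x + y / 2) ^ 2 / 2)) :=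
    Real.log_le_log (by positivity) (one_add_sq_add_two_mul_le hxy)
  rw [Real.log_mul (by positivity) (by positivity), Real.log_pow] at hlog
  push_cast at hlog
  linarith

theorem three_user_six_bit_gap_general (h_d : ℝ) (h_i : ℂ) (hd : 0 ≤ h_d) :
    Real.log 2 + Real.log (1 + (h_d + 2 * ‖h_i‖) ^ 2)
      - Real.log (1 + (h_d + ‖h_i‖ / 2) ^ 2 / 2)
    ≤ 6 * Real.log 2 := by
  linarith [log_one_add_sq_add_two_mul_sub_le (mul_nonneg hd (norm_nonneg h_i))]

theorem three_user_six_bit_gap (h_d : ℝ) (h_i : ℂ) (hd : 0 ≤ h_d) (hi : 1 ≤ ‖h_i‖) :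
    Real.log 2 + Real.log (1 + (h_d + 2 * ‖h_i‖) ^ 2)
      - Real.log (1 + (h_d + ‖h_i‖ / 2) ^ 2 / 2)
    ≤ 6 * Real.log 2 :=
  three_user_six_bit_gap_general h_d h_i hd
end
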